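/- Let R be a right perfect ring. If M = M₁ ⊕ M₂ is a dual automorphism-invariant right R-module, then M₁ and M₂ are both dual automorphism-invariant, M₁ is M₂-projective, and M₂ is M₁-projective. Consequently, over a right perfect ring, a right R-module M is quasi-projective if and only if M ⊕ M is dual automorphism-invariant. -/

import Mathlib

/-!
Dual automorphism-invariance of `M` says that any two surjections `π, w : M → Q` with small
kernels satisfy `w = π ∘ φ` for an endomorphism `φ` of `M`. On `M₁ × M₂`, comparing
`K.mkQ × id` with `w × id` shows that `M₁` inherits the property, and comparing
`id × K.mkQ` with the shear `(x, y) ↦ (x, [y] + f x)` lifts any `f : M₁ → M₂ ⧸ K` with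
`K` small.

Over a right perfect ring this lifting along small quotients already gives relative
projectivity: lift `f : M₁ → M₂ ⧸ N` along a projective cover `p : P → M₁` to `u : P → M₂`;
then `u (ker p)` is small and contained in `N`, and `u` descends to `M₁ → M₂ ⧸ u (ker p)`.
Conversely a quasi-projective `M` makes `M × M` quasi-projective, hence dual
automorphism-invariant.
-/

open LinearMap Submodule

/-- A submodule N of M is small (superfluous) in M:
N + K = M implies K = M for every submodule K. -/
def IsSmall {R : Type*} [Ring R] {M : Type*} [AddCommGroup M] [Module R M]
    (N : Submodule R M) : Prop :=
  ∀ K : Submodule R M, N ⊔ K = ⊤ → K = ⊤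

/-- M is a dual automorphism-invariant R-module: for any two small submodules
K₁, K₂ of M, every surjective homomorphism η : M/K₁ → M/K₂ whose kernel is
small in M/K₁ lifts to an endomorphism φ of M (i.e. π₂ ∘ φ = η ∘ π₁). -/
def IsDualAutoInv (R M : Type*) [Ring R] [AddCommGroup M] [Module R M] : Prop :=
  ∀ (K₁ K₂ : Submodule R M), IsSmall K₁ → IsSmall K₂ →
    ∀ η : (M ⧸ K₁) →ₗ[R] (M ⧸ K₂), Function.Surjective η →
      IsSmall (LinearMap.ker η) →
      ∃ φ : M →ₗ[R] M, K₂.mkQ ∘ₗ φ = η ∘ₗ K₁.mkQ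

universe u

/-- R is a (right) perfect ring: every R-module has a projective cover, i.e. a
surjection from a projective module with small kernel. -/
def IsRightPerfect (R : Type u) [Ring R] : Prop :=
  ∀ (A : Type u) [AddCommGroup A] [Module R A],
    ∃ (P : Type u) (_ : AddCommGroup P) (_ : Module R P),
      Module.Projective R P ∧
        ∃ μ : P →ₗ[R] A, Function.Surjective μ ∧ IsSmall (LinearMap.ker μ)

/-- A is B-projective: every homomorphism A → B/N lifts to a homomorphism A → B. -/
def IsRelProjective (R A B : Type*) [Ring R] [AddCommGroup A] [Module R A]
    [AddCommGroup B] [Module R B] : Prop :=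
  ∀ (N : Submodule R B) (f : A →ₗ[R] B ⧸ N), ∃ g : A →ₗ[R] B, N.mkQ ∘ₗ g = f

/-- M is quasi-projective: every homomorphism M → M/N lifts to an endomorphism of M. -/
def IsQuasiProjective (R M : Type*) [Ring R] [AddCommGroup M] [Module R M] : Prop :=
  ∀ (N : Submodule R M) (φ : M →ₗ[R] M ⧸ N), ∃ ψ : M →ₗ[R] M, N.mkQ ∘ₗ ψ = φ

section Small

variable {R M N : Type*} [Ring R] [AddCommGroup M] [Module R M] [AddCommGroup N] [Module R N]

theorem isSmall_bot : IsSmall (⊥ : Submodule R M) := fun K h => by simpa using h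

theorem IsSmall.mono {S T : Submodule R M} (hST : S ≤ T) (hT : IsSmall T) : IsSmall S :=
  fun K hK => hT K (top_le_iff.1 (hK ▸ sup_le_sup_right hST K))

theorem IsSmall.sup {S T : Submodule R M} (hS : IsSmall S) (hT : IsSmall T) :
    IsSmall (S ⊔ T) :=
  fun K hK => hT K (hS _ (by rwa [← sup_assoc]))

theorem IsSmall.map {K : Submodule R M} (hK : IsSmall K) (f : M →ₗ[R] N) :
    IsSmall (K.map f) := by
  intro L hL
  have hcomap : L.comap f = ⊤ := hK _ <| eq_top_iff.2 fun x _ => by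
    obtain ⟨_, ⟨k, hk, rfl⟩, l, hl, hx⟩ := mem_sup.1 (hL ▸ mem_top : f x ∈ K.map f ⊔ L)
    exact mem_sup.2 ⟨k, hk, x - k, by simpa [← hx] using hl, by abel⟩
  rw [← hL, eq_comm, sup_eq_right, map_le_iff_le_comap, hcomap]
  exact le_top

theorem IsSmall.comap {f : M →ₗ[R] N} (hf : Function.Surjective f) (hker : IsSmall (ker f))
    {S : Submodule R N} (hS : IsSmall S) : IsSmall (S.comap f) := by
  intro L hL
  have hmap : L.map f = ⊤ := hS _ <| by
    rw [eq_top_iff, ← range_eq_top.2 hf, ← Submodule.map_top, ← hL, Submodule.map_sup]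
    exact sup_le_sup_right (map_comap_le f S) _
  exact hker L (by rw [sup_comm, ← comap_map_eq, hmap, comap_top])

theorem IsSmall.prod {S : Submodule R M} {T : Submodule R N} (hS : IsSmall S) (hT : IsSmall T) :
    IsSmall (S.prod T) := by
  rw [prod_eq_sup_map]
  exact (hS.map _).sup (hT.map _)

end Small

section DualAutoInv

variable {R M N : Type*} [Ring R] [AddCommGroup M] [Module R M] [AddCommGroup N] [Module R N]

theorem isDualAutoInv_iff : IsDualAutoInv R M ↔
    ∀ K : Submodule R M, IsSmall K → ∀ w : M →ₗ[R] M ⧸ K, Function.Surjective w →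
      IsSmall (ker w) → ∃ φ : M →ₗ[R] M, K.mkQ ∘ₗ φ = w := by
  refine ⟨fun h K hK w hw hker => ?_, fun h K₁ K₂ hK₁ hK₂ η hη hker => ?_⟩
  · obtain ⟨φ, hφ⟩ := h (ker w) K hker hK ((ker w).liftQ w le_rfl)
      (by rwa [← range_eq_top, range_liftQ, range_eq_top])
      (by rw [ker_liftQ_eq_bot _ _ _ le_rfl]; exact isSmall_bot)
    exact ⟨φ, by rw [hφ, liftQ_mkQ]⟩
  · refine h K₂ hK₂ (η ∘ₗ K₁.mkQ) (hη.comp K₁.mkQ_surjective) ?_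
    rw [ker_comp]
    exact IsSmall.comap K₁.mkQ_surjective (by rwa [ker_mkQ]) hker

theorem IsDualAutoInv.exists_comp_eq (h : IsDualAutoInv R M) {π w : M →ₗ[R] N}
    (hπ : Function.Surjective π) (hπker : IsSmall (ker π))
    (hw : Function.Surjective w) (hwker : IsSmall (ker w)) :
    ∃ φ : M →ₗ[R] M, π ∘ₗ φ = w := by
  let q := π.quotKerEquivOfSurjective hπ
  obtain ⟨φ, hφ⟩ := isDualAutoInv_iff.1 h _ hπker (q.symm.toLinearMap ∘ₗ w)
    (q.symm.surjective.comp hw) (by rwa [LinearEquiv.ker_comp])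
  refine ⟨φ, LinearMap.ext fun x => ?_⟩
  simpa [q] using congr(q ($hφ x))

theorem IsDualAutoInv.of_linearEquiv (h : IsDualAutoInv R M) (e : M ≃ₗ[R] N) :
    IsDualAutoInv R N := by
  have isSmall_comap {S : Submodule R N} (hS : IsSmall S) :
      IsSmall (S.comap e.toLinearMap) := by
    simpa [comap_equiv_eq_map_symm] using hS.map e.symm.toLinearMap
  refine isDualAutoInv_iff.2 fun K hK w hw hker => ?_
  obtain ⟨φ, hφ⟩ := h.exists_comp_eq
    (π := K.mkQ ∘ₗ e.toLinearMap) (w := w ∘ₗ e.toLinearMap)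
    (K.mkQ_surjective.comp e.surjective) (by simpa [ker_comp] using isSmall_comap hK)
    (hw.comp e.surjective) (by simpa [ker_comp] using isSmall_comap hker)
  refine ⟨e.toLinearMap ∘ₗ φ ∘ₗ e.symm.toLinearMap, LinearMap.ext fun x => ?_⟩
  simpa using congr($hφ (e.symm x))

end DualAutoInv

def IsSmallRelProjective (R A B : Type*) [Ring R] [AddCommGroup A] [Module R A]
    [AddCommGroup B] [Module R B] : Prop :=
  ∀ K : Submodule R B, IsSmall K → ∀ f : A →ₗ[R] B ⧸ K, ∃ g : A →ₗ[R] B, K.mkQ ∘ₗ g = f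

section Prod

variable {R M₁ M₂ : Type*} [Ring R] [AddCommGroup M₁] [Module R M₁]
  [AddCommGroup M₂] [Module R M₂]

theorem IsDualAutoInv.prodComm (h : IsDualAutoInv R (M₁ × M₂)) :
    IsDualAutoInv R (M₂ × M₁) :=
  h.of_linearEquiv (LinearEquiv.prodComm R M₁ M₂)

theorem IsDualAutoInv.of_prod_left (h : IsDualAutoInv R (M₁ × M₂)) :
    IsDualAutoInv R M₁ := by
  refine isDualAutoInv_iff.2 fun K hK w hw hker => ?_
  obtain ⟨Φ, hΦ⟩ := h.exists_comp_eq (π := K.mkQ.prodMap id) (w := w.prodMap id)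
    (K.mkQ_surjective.prodMap Function.surjective_id)
    (by simpa [ker_prodMap] using hK.prod (isSmall_bot (M := M₂)))
    (hw.prodMap Function.surjective_id)
    (by simpa [ker_prodMap] using hker.prod (isSmall_bot (M := M₂)))
  exact ⟨fst R M₁ M₂ ∘ₗ Φ ∘ₗ inl R M₁ M₂,
    LinearMap.ext fun x => by simpa using congr(($hΦ (x, 0)).1)⟩

theorem IsDualAutoInv.of_prod_right (h : IsDualAutoInv R (M₁ × M₂)) :
    IsDualAutoInv R M₂ :=
  h.prodComm.of_prod_left

theorem IsDualAutoInv.isSmallRelProjective (h : IsDualAutoInv R (M₁ × M₂)) :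
    IsSmallRelProjective R M₁ M₂ := by
  intro K hK f
  let shear := (LinearMap.fst R M₁ M₂).prod (K.mkQ ∘ₗ snd R M₁ M₂ + f ∘ₗ fst R M₁ M₂)
  have hshear : Function.Surjective shear := fun ⟨a, z⟩ => by
    obtain ⟨b, hb⟩ := K.mkQ_surjective (z - f a)
    exact ⟨(a, b), by simp [shear, hb]⟩
  have hker : ker shear ≤ (⊥ : Submodule R M₁).prod K := fun ⟨x, y⟩ hxy => by
    obtain ⟨rfl, hy⟩ : x = 0 ∧ K.mkQ y + f x = 0 := by simpa [shear] using hxy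
    simpa using hy
  obtain ⟨Φ, hΦ⟩ := h.exists_comp_eq (π := id.prodMap K.mkQ) (w := shear)
    (Function.surjective_id.prodMap K.mkQ_surjective)
    (by simpa [ker_prodMap] using isSmall_bot.prod hK)
    hshear ((isSmall_bot.prod hK).mono hker)
  exact ⟨snd R M₁ M₂ ∘ₗ Φ ∘ₗ inl R M₁ M₂,
    LinearMap.ext fun x => by simpa [shear] using congr(($hΦ (x, 0)).2)⟩

end Prod

section RelProjective

variable {R A A' B B₁ B₂ C : Type*} [Ring R] [AddCommGroup A] [Module R A]
  [AddCommGroup A'] [Module R A'] [AddCommGroup B] [Module R B] [AddCommGroup B₁] [Module R B₁]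
  [AddCommGroup B₂] [Module R B₂] [AddCommGroup C] [Module R C]

theorem IsRelProjective.exists_comp_eq (h : IsRelProjective R A B) {π : B →ₗ[R] C}
    (hπ : Function.Surjective π) (f : A →ₗ[R] C) : ∃ g : A →ₗ[R] B, π ∘ₗ g = f := by
  let q := π.quotKerEquivOfSurjective hπ
  obtain ⟨g, hg⟩ := h (ker π) (q.symm.toLinearMap ∘ₗ f)
  refine ⟨g, LinearMap.ext fun a => ?_⟩
  simpa [q] using congr(q ($hg a))

theorem IsRelProjective.prod_left (h : IsRelProjective R A B) (h' : IsRelProjective R A' B) :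
    IsRelProjective R (A × A') B := by
  intro N f
  obtain ⟨g, hg⟩ := h N (f ∘ₗ inl R A A')
  obtain ⟨g', hg'⟩ := h' N (f ∘ₗ inr R A A')
  refine ⟨g.coprod g', ?_⟩
  rw [comp_coprod, hg, hg', coprod_comp_inl_inr]

theorem IsRelProjective.prod_right (h₁ : IsRelProjective R A B₁)
    (h₂ : IsRelProjective R A B₂) : IsRelProjective R A (B₁ × B₂) := by
  intro N f
  -- Lift `f` through `B₁` modulo the image of `B₂`, then lift the error, which lies in that
  -- image, through `B₂`.
  let r := N.mkQ ∘ₗ inr R B₁ B₂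
  let s := (range r).mkQ ∘ₗ N.mkQ ∘ₗ inl R B₁ B₂
  have hs : Function.Surjective s := by
    intro z
    obtain ⟨⟨b₁, b₂⟩, rfl⟩ := ((range r).mkQ_surjective.comp N.mkQ_surjective) z
    refine ⟨b₁, (Submodule.Quotient.eq _).2 ⟨-b₂, ?_⟩⟩
    simp [r, ← Submodule.Quotient.mk_sub]
  obtain ⟨g₁, hg₁⟩ := h₁.exists_comp_eq hs ((range r).mkQ ∘ₗ f)
  let d := f - N.mkQ ∘ₗ inl R B₁ B₂ ∘ₗ g₁
  have hd (a : A) : d a ∈ range r := by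
    rw [← Submodule.Quotient.mk_eq_zero, LinearMap.sub_apply, Submodule.Quotient.mk_sub,
      sub_eq_zero]
    exact congr($hg₁ a).symm
  obtain ⟨g₂, hg₂⟩ := h₂.exists_comp_eq r.surjective_rangeRestrict (d.codRestrict _ hd)
  refine ⟨g₁.prod g₂, LinearMap.ext fun a => ?_⟩
  have hrg₂ : r (g₂ a) = d a := congr(($hg₂ a : (B₁ × B₂) ⧸ N))
  calc N.mkQ (g₁ a, g₂ a) = N.mkQ (inl R B₁ B₂ (g₁ a)) + r (g₂ a) := by
        simp [r, ← Submodule.Quotient.mk_add]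
    _ = f a := by simp [hrg₂, d]

end RelProjective

theorem IsSmallRelProjective.isRelProjective {R : Type u} [Ring R] (hR : IsRightPerfect R)
    {A B : Type u} [AddCommGroup A] [Module R A] [AddCommGroup B] [Module R B]
    (h : IsSmallRelProjective R A B) : IsRelProjective R A B := by
  intro N f
  obtain ⟨P, _, _, _, p, hp, hker⟩ := hR A
  obtain ⟨u, hu⟩ := Module.projective_lifting_property N.mkQ (f ∘ₗ p) N.mkQ_surjective
  let K := (ker p).map u
  have hKN : K ≤ N := map_le_iff_le_comap.2 fun x hx => by
    rw [mem_comap, ← Submodule.Quotient.mk_eq_zero]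
    simpa [mem_ker.1 hx] using congr($hu x)
  obtain ⟨v, hv⟩ : ∃ v : A →ₗ[R] B ⧸ K, v ∘ₗ p = K.mkQ ∘ₗ u :=
    ⟨(ker p).liftQ (K.mkQ ∘ₗ u) (fun x hx => by simpa using mem_map_of_mem hx) ∘ₗ
      (p.quotKerEquivOfSurjective hp).symm.toLinearMap, LinearMap.ext fun x => by simp⟩
  obtain ⟨g, hg⟩ := h K (hker.map u) v
  refine ⟨g, (cancel_right hp).1 ?_⟩
  calc (N.mkQ ∘ₗ g) ∘ₗ p = factor hKN ∘ₗ (K.mkQ ∘ₗ g) ∘ₗ p := by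
        rw [← comp_assoc, ← comp_assoc, factor_comp_mk, comp_assoc]
    _ = factor hKN ∘ₗ K.mkQ ∘ₗ u := by rw [hg, hv]
    _ = f ∘ₗ p := by rw [← comp_assoc, factor_comp_mk, hu]

section QuasiProjective

variable {R M : Type*} [Ring R] [AddCommGroup M] [Module R M]

theorem IsQuasiProjective.prod (h : IsQuasiProjective R M) : IsQuasiProjective R (M × M) :=
  have h' : IsRelProjective R M (M × M) := IsRelProjective.prod_right h h
  h'.prod_left h'

theorem IsQuasiProjective.isDualAutoInv (h : IsQuasiProjective R M) : IsDualAutoInv R M :=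
  fun K₁ K₂ _ _ η _ _ => h K₂ (η ∘ₗ K₁.mkQ)

end QuasiProjective

/-- Over a right perfect ring R: if M₁ ⊕ M₂ is dual automorphism-invariant, then
M₁ and M₂ are dual automorphism-invariant and projective relative to each other;
consequently M is quasi-projective iff M ⊕ M is dual automorphism-invariant. -/
theorem perfect_dualAutoInv_prod
    {R : Type u} [Ring R] (hR : IsRightPerfect R) :
    (∀ (M₁ M₂ : Type u) [AddCommGroup M₁] [Module R M₁] [AddCommGroup M₂] [Module R M₂],
        IsDualAutoInv R (M₁ × M₂) →
          IsDualAutoInv R M₁ ∧ IsDualAutoInv R M₂ ∧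
            IsRelProjective R M₁ M₂ ∧ IsRelProjective R M₂ M₁) ∧
    (∀ (M : Type u) [AddCommGroup M] [Module R M],
        IsQuasiProjective R M ↔ IsDualAutoInv R (M × M)) :=
  ⟨fun _ _ _ _ _ _ h => ⟨h.of_prod_left, h.of_prod_right,
      h.isSmallRelProjective.isRelProjective hR,
      h.prodComm.isSmallRelProjective.isRelProjective hR⟩,
    fun _ _ _ => ⟨fun h => h.prod.isDualAutoInv,
      fun h => h.isSmallRelProjective.isRelProjective hR⟩⟩
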